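/- arXiv:1403.6404 — 3 statements merged into one kernel-verified Lean document; each statement's English description precedes it below -/
import Mathlib

section
/- Let a > 0 and b ≤ 1 be real numbers. Then for all real numbers x ≥ b, one has x - a·log(max(1,x)) ≥ (1/2)·x + min((1/2)·b, a - a·log(2a)). -/
open Real

/-- The tangent line to `a * log` at `x = 2 * a`, where its slope is `1 / 2`, lies above it. -/
lemma mul_log_le_half_add_sub {a x : ℝ} (ha : 0 < a) (hx : 0 < x) :
    a * log x ≤ x / 2 + (a * log (2 * a) - a) := by
  have h2a : 0 < 2 * a := by positivity
  have hlog : log x - log (2 * a) ≤ x / (2 * a) - 1 := by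
    rw [← log_div hx.ne' h2a.ne']
    exact log_le_sub_one_of_pos (div_pos hx h2a)
  have hscale : a * (x / (2 * a)) = x / 2 := by field_simp
  have hbound := mul_le_mul_of_nonneg_left hlog ha.le
  rw [mul_sub, mul_sub, hscale, mul_one] at hbound
  linarith

theorem stmt_0_general (a b : ℝ) (ha : 0 < a) :
    ∀ x : ℝ, b ≤ x →
      x - a * Real.log (max 1 x) ≥
        (1/2) * x + min ((1/2) * b) (a - a * Real.log (2*a)) := by
  intro x hx
  rcases le_or_gt x 1 with hx1 | hx1
  · rw [max_eq_left hx1, log_one, mul_zero, sub_zero]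
    linarith [min_le_left ((1/2) * b) (a - a * log (2*a))]
  · rw [max_eq_right hx1.le]
    linarith [min_le_right ((1/2) * b) (a - a * log (2*a)),
      mul_log_le_half_add_sub ha (zero_lt_one.trans hx1)]

theorem stmt_0 (a b : ℝ) (ha : 0 < a) (hb : b ≤ 1) :
    ∀ x : ℝ, b ≤ x →
      x - a * Real.log (max 1 x) ≥
        (1/2) * x + min ((1/2) * b) (a - a * Real.log (2*a)) :=
  stmt_0_general a b ha
end

section
/- Let A be a discrete valuation ring whose fraction field K has characteristic zero, and let B be the integral closure of A in a finite field extension L/K of degree n. Suppose B is a discrete valuation ring with ramification index e over A. Then the valuation on B of the different ideal 𝔇_{B/A} satisfies ord_B(𝔇_{B/A}) ≤ e - 1 + e·ord_A(n). -/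
/-!
If `𝔇_{B/A} ⊆ π^{v+1} B` for a uniformizer `π` of `A`, then `π^{-(v+1)}` lies in the inverse
different, so its trace `n π^{-(v+1)}` lies in `A`, i.e. `π^{v+1} ∣ n`, contradicting
`ord_A(n) = v`. Since `π B = 𝔪_B ^ e`, this says `r < e (v + 1)`.
-/

theorem Ideal.ramificationIdx'_eq_of_map_eq_pow {R S : Type*} [CommRing R] [CommRing S]
    [IsDedekindDomain S] [Algebra R S] {p : Ideal R} {P : Ideal S} (hP0 : P ≠ ⊥) (hP1 : P ≠ ⊤)
    {k : ℕ} (h : p.map (algebraMap R S) = P ^ k) : p.ramificationIdx' P = k :=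
  Ideal.ramificationIdx'_spec h.le <| by
    rw [h]
    exact (Ideal.pow_right_strictAnti P hP0 hP1 k.lt_succ_self).not_ge

theorem IsDiscreteValuationRing.exists_eq_maximalIdeal_pow {R : Type*} [CommRing R] [IsDomain R]
    [IsDiscreteValuationRing R] {I : Ideal R} (hI : I ≠ ⊥) :
    ∃ k, I = IsLocalRing.maximalIdeal R ^ k := by
  obtain ⟨ϖ, hϖ⟩ := exists_irreducible R
  obtain ⟨k, rfl⟩ := ideal_eq_span_pow_irreducible hI hϖ
  exact ⟨k, by rw [hϖ.maximalIdeal_eq, Ideal.span_singleton_pow]⟩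

theorem dvd_finrank_of_differentIdeal_le_span (A K L B : Type*) [CommRing A] [IsDomain A]
    [IsIntegrallyClosed A] [Field K] [Field L] [CommRing B] [IsDedekindDomain B]
    [Algebra A K] [IsFractionRing A K] [Algebra K L] [FiniteDimensional K L]
    [Algebra.IsSeparable K L]
    [Algebra A B] [Algebra B L] [Algebra A L] [IsScalarTower A K L] [IsScalarTower A B L]
    [IsFractionRing B L] [IsIntegralClosure B A L] [Module.IsTorsionFree A B]
    {a : A} (ha : a ≠ 0) (h : differentIdeal A B ≤ Ideal.span {algebraMap A B a}) :
    a ∣ (Module.finrank K L : A) := by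
  have haB : algebraMap A B a ≠ 0 := by
    simpa using (FaithfulSMul.algebraMap_injective A B).ne ha
  have haK : algebraMap A K a ≠ 0 := by
    simpa using (IsFractionRing.injective A K).ne ha
  have hinv : algebraMap K L (algebraMap A K a)⁻¹ ∈
      ((Ideal.span {algebraMap A B a} : FractionalIdeal (nonZeroDivisors B) L)⁻¹) := by
    rw [FractionalIdeal.coeIdeal_span_singleton, FractionalIdeal.spanSingleton_inv,
      ← IsScalarTower.algebraMap_apply, IsScalarTower.algebraMap_apply A K L, ← map_inv₀]
    exact FractionalIdeal.mem_spanSingleton_self _ _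
  have htrace := (differentialIdeal_le_iff (K := K) (L := L)
    (by simpa [Ideal.span_singleton_eq_bot])).mp h (Submodule.mem_map_of_mem hinv)
  obtain ⟨b, hb⟩ := Submodule.mem_one.mp htrace
  rw [LinearMap.restrictScalars_apply, Algebra.trace_algebraMap] at hb
  refine ⟨b, IsFractionRing.injective A K ?_⟩
  rw [map_mul, hb, map_natCast, nsmul_eq_mul]
  field_simp

/-- Lenstra's generalization of Dedekind's discriminant bound: if `A` is a DVR whose
fraction field `K` has characteristic zero, `B` is the integral closure of `A` in a finite
extension `L/K` of degree `n`, and `B` is a DVR with ramification index `e` over `A`, then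
the valuation `r` on `B` of the different ideal `𝔇_{B/A}` satisfies
`r ≤ e - 1 + e · ord_A(n)`. -/
theorem stmt_3 (A K L B : Type*) [CommRing A] [IsDomain A] [IsDiscreteValuationRing A]
    [Field K] [Field L] [CommRing B] [IsDomain B] [IsDiscreteValuationRing B]
    [Algebra A K] [IsFractionRing A K] [CharZero K]
    [Algebra K L] [FiniteDimensional K L]
    [Algebra A B] [Algebra B L] [Algebra A L]
    [IsScalarTower A K L] [IsScalarTower A B L]
    [IsIntegralClosure B A L] [NoZeroSMulDivisors A B]
    (n : ℕ) (hn : n = Module.finrank K L)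
    (e : ℕ) (he : e = Ideal.ramificationIdx'
      (IsLocalRing.maximalIdeal A) (IsLocalRing.maximalIdeal B))
    (r : ℕ) (hr : differentIdeal A B = IsLocalRing.maximalIdeal B ^ r)
    (v : ℕ) (hv : IsDiscreteValuationRing.addVal A (n : A) = (v : ℕ∞)) :
    (r : ℤ) ≤ e - 1 + e * v := by
  have : IsFractionRing B L := IsIntegralClosure.isFractionRing_of_finite_extension A K L B
  obtain ⟨π, hπ⟩ := IsDiscreteValuationRing.exists_irreducible A
  have hmap : (IsLocalRing.maximalIdeal A).map (algebraMap A B) =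
      IsLocalRing.maximalIdeal B ^ e := by
    obtain ⟨k, hk⟩ := IsDiscreteValuationRing.exists_eq_maximalIdeal_pow
      ((Ideal.map_eq_bot_iff_of_injective (FaithfulSMul.algebraMap_injective A B)).not.mpr
        (IsDiscreteValuationRing.not_a_field A))
    rwa [he, Ideal.ramificationIdx'_eq_of_map_eq_pow
      (IsDiscreteValuationRing.not_a_field B) (Ideal.IsMaximal.ne_top inferInstance) hk]
  have hlt : r < e * (v + 1) := by
    by_contra! hle
    have hdvd : π ^ (v + 1) ∣ (n : A) := by
      refine hn ▸ dvd_finrank_of_differentIdeal_le_span A K L B (pow_ne_zero _ hπ.ne_zero) ?_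
      rw [hr, map_pow, ← Ideal.span_singleton_pow, ← Set.image_singleton, ← Ideal.map_span,
        ← hπ.maximalIdeal_eq, hmap, ← pow_mul]
      exact Ideal.pow_le_pow_right hle
    have hval := (IsDiscreteValuationRing.addVal_le_iff_dvd (R := A)).mpr hdvd
    rw [hπ.addVal_pow, hv] at hval
    exact absurd (by exact_mod_cast hval) (Nat.not_succ_le_self v)
  zify at hlt
  linarith
end

section
/- Let c > 0 and t ≥ √3/2 be real numbers and let b be a real number. Then the series ∑_{n ∈ ℤ} exp(-π·c·(n+b)²·t) converges and is bounded above by 2/(1 - exp(-π·c·t)). -/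
/-!
The Gaussian term at `n + b` only depends on `n + b`, so shifting the summation index by `⌊b⌋`
reduces to `0 ≤ b ≤ 1`. Then `|n + b| ≥ n` and `|-(n + 1) + b| ≥ n` for `n : ℕ`, and `n ≤ n ^ 2`,
so both halves of the sum are dominated by the geometric series `∑ exp (-a) ^ n = 1 / (1 - exp (-a))`.
-/

open Real

lemma natCast_le_sq_of_le_abs {n : ℕ} {x : ℝ} (h : (n : ℝ) ≤ |x|) : (n : ℝ) ≤ x ^ 2 :=
  calc (n : ℝ) ≤ (n : ℝ) ^ 2 := by exact_mod_cast Nat.le_self_pow two_ne_zero n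
    _ ≤ |x| ^ 2 := by gcongr
    _ = x ^ 2 := sq_abs x

lemma exp_neg_mul_sq_le_exp_neg_pow {a x : ℝ} {n : ℕ} (ha : 0 ≤ a) (h : (n : ℝ) ≤ |x|) :
    exp (-a * x ^ 2) ≤ exp (-a) ^ n := by
  rw [← exp_nat_mul, exp_le_exp]
  nlinarith [natCast_le_sq_of_le_abs h]

lemma summable_and_tsum_le_of_le_geometric {f : ℤ → ℝ} {r : ℝ} (hf : 0 ≤ f) (hr₀ : 0 ≤ r)
    (hr₁ : r < 1) (hpos : ∀ n : ℕ, f n ≤ r ^ n) (hneg : ∀ n : ℕ, f (-(n + 1)) ≤ r ^ n) :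
    Summable f ∧ ∑' n, f n ≤ 2 / (1 - r) := by
  have hgeo := summable_geometric_of_lt_one hr₀ hr₁
  have hs₁ : Summable fun n : ℕ => f n := .of_nonneg_of_le (fun _ => hf _) hpos hgeo
  have hs₂ : Summable fun n : ℕ => f (-(n + 1)) := .of_nonneg_of_le (fun _ => hf _) hneg hgeo
  refine ⟨.of_nat_of_neg_add_one hs₁ hs₂, ?_⟩
  have h₁ := hs₁.tsum_le_tsum hpos hgeo
  have h₂ := hs₂.tsum_le_tsum hneg hgeo
  rw [tsum_geometric_of_lt_one hr₀ hr₁] at h₁ h₂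
  calc ∑' n, f n = ∑' n : ℕ, f n + ∑' n : ℕ, f (-(n + 1)) := tsum_of_nat_of_neg_add_one hs₁ hs₂
    _ ≤ (1 - r)⁻¹ + (1 - r)⁻¹ := add_le_add h₁ h₂
    _ = 2 / (1 - r) := by ring

lemma summable_and_tsum_exp_neg_mul_sq_le_of_mem_Icc {a β : ℝ} (ha : 0 < a) (hβ : β ∈ Set.Icc 0 1) :
    Summable (fun n : ℤ => exp (-a * (n + β) ^ 2)) ∧
      ∑' n : ℤ, exp (-a * (n + β) ^ 2) ≤ 2 / (1 - exp (-a)) := by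
  obtain ⟨hβ₀, hβ₁⟩ := hβ
  refine summable_and_tsum_le_of_le_geometric (fun _ => (exp_pos _).le) (exp_pos _).le
    (exp_lt_one_iff.mpr (neg_neg_of_pos ha)) (fun n => ?_) (fun n => ?_)
  all_goals
    refine exp_neg_mul_sq_le_exp_neg_pow ha.le ?_
    push_cast
  · rw [abs_of_nonneg (by positivity)]
    linarith
  · rw [abs_of_nonpos (by linarith)]
    linarith

lemma summable_and_tsum_exp_neg_mul_sq_le {a : ℝ} (ha : 0 < a) (b : ℝ) :
    Summable (fun n : ℤ => exp (-a * (n + b) ^ 2)) ∧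
      ∑' n : ℤ, exp (-a * (n + b) ^ 2) ≤ 2 / (1 - exp (-a)) := by
  have hshift : (fun n : ℤ => exp (-a * (n + b) ^ 2)) =
      (fun m : ℤ => exp (-a * (m + Int.fract b) ^ 2)) ∘ Equiv.addRight ⌊b⌋ := by
    ext n
    simp only [Function.comp_apply, Equiv.coe_addRight, Int.cast_add, Int.fract]
    ring_nf
  obtain ⟨hs, hle⟩ := summable_and_tsum_exp_neg_mul_sq_le_of_mem_Icc ha
    ⟨Int.fract_nonneg b, (Int.fract_lt_one b).le⟩
  rw [hshift]
  exact ⟨(Equiv.addRight _).summable_iff.mpr hs, ((Equiv.addRight _).tsum_eq _).trans_le hle⟩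

theorem stmt_5 (c t b : ℝ) (hc : 0 < c) (ht : Real.sqrt 3 / 2 ≤ t) :
    Summable (fun n : ℤ => Real.exp (-Real.pi * c * ((n : ℝ) + b)^2 * t)) ∧
      ∑' n : ℤ, Real.exp (-Real.pi * c * ((n : ℝ) + b)^2 * t) ≤
        2 / (1 - Real.exp (-Real.pi * c * t)) := by
  have ht₀ : 0 < t := lt_of_lt_of_le (by positivity) ht
  have hrw : ∀ x : ℝ, -π * c * x ^ 2 * t = -(π * c * t) * x ^ 2 := fun x => by ring
  have hrw₁ : -π * c * t = -(π * c * t) := by ring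
  simpa only [hrw, hrw₁] using
    summable_and_tsum_exp_neg_mul_sq_le (by positivity : 0 < π * c * t) b
end
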